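/- arXiv:math/9503217 — 2 statements merged into one kernel-verified Lean document; each statement's English description precedes it below -/
import Mathlib

section
/- Negligibility of a subset element is local: let X be locally connected, 𝒱 an open cover of X, and (U, I) a pair with U open in X and I ⊆ U. If for each V ∈ 𝒱 the set V ∩ I is negligible in the subspace V ∩ U, then I is negligible in the subspace U. -/
open Set Topology

/-- An open subset `U` is Z-dense if it meets every non-empty open connected set
in a non-empty connected set. -/
def IsZDense {X : Type*} [TopologicalSpace X] (U : Set X) : Prop :=
  IsOpen U ∧ ∀ C : Set X, IsOpen C → IsConnected C → IsConnected (U ∩ C)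

/-- A subset is negligible if its complement is Z-dense. -/
def IsNegligible {X : Type*} [TopologicalSpace X] (I : Set X) : Prop :=
  IsZDense Iᶜ

/-!
`I` is negligible in `U` iff `U \ I` is open and `W \ I` is connected for every open connected
`W ⊆ U`. Openness is local, and by local connectedness every point of `U` has arbitrarily small
open connected neighbourhoods inside some `V ∩ U` with `V ∈ 𝒱`, so that `W \ I` is connected
near every point of `W`. A connected open set `W` in which `S ∩ ·` is connected on arbitrarily
small neighbourhoods of each point has `S ∩ W` connected: given a separation `u, v` of `S ∩ W`,
each point of `W` lies in the interior of `Sᶜ ∪ u` or of `Sᶜ ∪ v`, and these two open sets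
separate `W`.
-/

section

variable {X : Type*} [TopologicalSpace X]

theorem Topology.IsInducing.isConnected_image {Y : Type*} [TopologicalSpace Y] {f : X → Y}
    (hf : IsInducing f) {s : Set X} : IsConnected (f '' s) ↔ IsConnected s := by
  simp only [IsConnected, Set.image_nonempty, hf.isPreconnected_image]

theorem isZDense_preimage_val_iff {V s : Set X} (hV : IsOpen V) :
    IsZDense (Subtype.val ⁻¹' s : Set V) ↔
      IsOpen (V ∩ s) ∧ ∀ W, IsOpen W → IsConnected W → W ⊆ V → IsConnected (s ∩ W) := by
  refine and_congr ?_ ⟨fun h W hW hWc hWV => ?_, fun h C hC hCc => ?_⟩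
  · rw [hV.isOpenEmbedding_subtypeVal.isOpen_iff_image_isOpen, Subtype.image_preimage_val]
  · have hWc' : IsConnected (Subtype.val ⁻¹' W : Set V) := by
      rwa [← IsInducing.subtypeVal.isConnected_image, Subtype.image_preimage_val,
        inter_eq_right.mpr hWV]
    have := h _ (hW.preimage continuous_subtype_val) hWc'
    rwa [← preimage_inter, ← IsInducing.subtypeVal.isConnected_image, Subtype.image_preimage_val,
      inter_eq_right.mpr (inter_subset_right.trans hWV)] at this
  · have := h (Subtype.val '' C) (hV.isOpenMap_subtype_val C hC)
      (IsInducing.subtypeVal.isConnected_image.mpr hCc) (Subtype.coe_image_subset V C)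
    rwa [inter_comm, ← image_inter_preimage, IsInducing.subtypeVal.isConnected_image,
      inter_comm] at this

theorem IsConnected.inter_of_forall_small_nhds {C S : Set X} (hC : IsConnected C)
    (hCo : IsOpen C) (h : ∀ x ∈ C, ∀ N ∈ 𝓝 x, ∃ W ∈ 𝓝 x, W ⊆ N ∧ IsConnected (S ∩ W)) :
    IsConnected (S ∩ C) := by
  have small_nhd_subset {x} (hx : x ∈ C) {N} (hN : N ∈ 𝓝 x) :
      ∃ W ∈ 𝓝 x, W ⊆ N ∩ C ∧ IsConnected (S ∩ W) :=
    h x hx _ (Filter.inter_mem hN (hCo.mem_nhds hx))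
  obtain ⟨x, hx⟩ := hC.nonempty
  refine ⟨?_, fun u v hu hv hSuv ⟨a, haSC, hau⟩ ⟨b, hbSC, hbv⟩ => ?_⟩
  · obtain ⟨W, -, hWC, hW⟩ := small_nhd_subset hx Filter.univ_mem
    exact hW.nonempty.mono (inter_subset_inter_right S (hWC.trans inter_subset_right))
  by_contra huv
  have not_mem_uv {y} (hy : y ∈ S ∩ C) (hyu : y ∈ u) (hyv : y ∈ v) : False :=
    huv ⟨y, hy, hyu, hyv⟩
  have mem_of_mem_interior {y w} (hyS : y ∈ S) (hy : y ∈ interior (Sᶜ ∪ w)) : y ∈ w :=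
    (interior_subset hy).resolve_left (not_not_intro hyS)
  have hcover : C ⊆ interior (Sᶜ ∪ u) ∪ interior (Sᶜ ∪ v) := by
    intro y hy
    obtain ⟨W, hW, hWC, hWc⟩ := small_nhd_subset hy Filter.univ_mem
    have hWSC : S ∩ W ⊆ S ∩ C := inter_subset_inter_right S (hWC.trans inter_subset_right)
    have hWuv : S ∩ W ∩ (u ∩ v) = ∅ :=
      eq_empty_iff_forall_notMem.mpr fun z hz => not_mem_uv (hWSC hz.1) hz.2.1 hz.2.2
    rcases isPreconnected_iff_subset_of_disjoint.mp hWc.isPreconnected u v hu hv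
      (hWSC.trans hSuv) hWuv with hWu | hWv
    exacts [Or.inl (mem_interior_iff_mem_nhds.mpr (Filter.mem_of_superset hW
        ((inter_subset _ _ _).mp (by rwa [inter_comm])))),
      Or.inr (mem_interior_iff_mem_nhds.mpr (Filter.mem_of_superset hW
        ((inter_subset _ _ _).mp (by rwa [inter_comm]))))]
  obtain ⟨z, hzC, hzu, hzv⟩ := hC.isPreconnected _ _ isOpen_interior isOpen_interior hcover
    ⟨a, haSC.2, (hcover haSC.2).resolve_right fun ha =>
      not_mem_uv haSC hau (mem_of_mem_interior haSC.1 ha)⟩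
    ⟨b, hbSC.2, (hcover hbSC.2).resolve_left fun hb =>
      not_mem_uv hbSC (mem_of_mem_interior hbSC.1 hb) hbv⟩
  obtain ⟨W, -, hWN, hWc⟩ := small_nhd_subset hzC
    (Filter.inter_mem (isOpen_interior.mem_nhds hzu) (isOpen_interior.mem_nhds hzv))
  obtain ⟨w, hwS, hwW⟩ := hWc.nonempty
  obtain ⟨⟨hwu, hwv⟩, hwC⟩ := hWN hwW
  exact not_mem_uv ⟨hwS, hwC⟩ (mem_of_mem_interior hwS hwu) (mem_of_mem_interior hwS hwv)

end

theorem isNegligible_of_cover_general {X : Type*} [TopologicalSpace X] [LocallyConnectedSpace X]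
    {𝒱 : Set (Set X)} (hV : ∀ V ∈ 𝒱, IsOpen V) (hcov : ⋃₀ 𝒱 = Set.univ)
    {U I : Set X} (hU : IsOpen U)
    (hloc : ∀ V ∈ 𝒱, IsNegligible ((Subtype.val ⁻¹' I : Set ↥(V ∩ U)))) :
    IsNegligible ((Subtype.val ⁻¹' I : Set ↥U)) := by
  have hdense (V) (hV' : V ∈ 𝒱) :=
    (isZDense_preimage_val_iff (s := Iᶜ) ((hV V hV').inter hU)).mp (hloc V hV')
  have hmem (x : X) : ∃ V ∈ 𝒱, x ∈ V := sUnion_eq_univ_iff.mp hcov x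
  refine (isZDense_preimage_val_iff (s := Iᶜ) hU).mpr ⟨isOpen_iff_mem_nhds.mpr fun x hx => ?_,
    fun W hW hWc hWU => hWc.inter_of_forall_small_nhds hW fun x hx N hN => ?_⟩
  · obtain ⟨V, hV', hxV⟩ := hmem x
    exact Filter.mem_of_superset ((hdense V hV').1.mem_nhds ⟨⟨hxV, hx.1⟩, hx.2⟩)
      fun y hy => ⟨hy.1.2, hy.2⟩
  · obtain ⟨V, hV', hxV⟩ := hmem x
    obtain ⟨W', hW'N, hW'o, hxW', hW'c⟩ :=
      locallyConnectedSpace_iff_subsets_isOpen_isConnected.mp ‹_› x (N ∩ (V ∩ U))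
        (Filter.inter_mem hN (((hV V hV').inter hU).mem_nhds ⟨hxV, hWU hx⟩))
    exact ⟨W', hW'o.mem_nhds hxW', hW'N.trans inter_subset_left,
      (hdense V hV').2 W' hW'o hW'c (hW'N.trans inter_subset_right)⟩

/-- Negligibility of a subset element is local: if every member of an open cover
sees `I` as negligible in `V ∩ U`, then `I` is negligible in `U`. -/
theorem isNegligible_of_cover {X : Type*} [TopologicalSpace X] [LocallyConnectedSpace X]
    {𝒱 : Set (Set X)} (hV : ∀ V ∈ 𝒱, IsOpen V) (hcov : ⋃₀ 𝒱 = Set.univ)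
    {U I : Set X} (hU : IsOpen U) (hIU : I ⊆ U)
    (hloc : ∀ V ∈ 𝒱, IsNegligible ((Subtype.val ⁻¹' I : Set ↥(V ∩ U)))) :
    IsNegligible ((Subtype.val ⁻¹' I : Set ↥U)) :=
  isNegligible_of_cover_general hV hcov hU hloc
end

section
/- Let X be a topological manifold, Y a normal Hausdorff locally connected space, f : X → Y continuous, and Z ⊆ X a closed submanifold of codimension 1 such that f is diffuse on X − Z. Then f fails to be diffuse if and only if there exists a non-empty open subset W of Z such that the closure of f(W) in Y is negligible in Y. -/
/-!
Near a point of `Z`, a chart ball `V` centred on `Z` is cut by `Z` into two open half-balls, and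
every point of `V ∩ Z` lies on arbitrarily small connected sets meeting both halves. Let `(U, I)`
be a negligible element. Since `f` is diffuse off `Z`, removing `f⁻¹ I` leaves both halves
connected, and they get glued back together exactly when `V ∩ Z ⊄ f⁻¹ I`. So if `f` is not
diffuse, some open piece `W` of `Z` is mapped into `I`, and by regularity of `Y` it can be shrunk
so that `closure (f W)` is a closed subset of `I` inside `U`, hence negligible. Conversely, if
`closure (f W)` is negligible, removing its preimage disconnects a small ball around a point
of `W`. Connectedness of `C \ f⁻¹ I` for an open connected `C ⊆ f⁻¹ U` is local, because
`C \ f⁻¹ I` is dense in `C`.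
-/

open Set Topology

/-- A negligible subset element `(U, I)`: `U` open, `I ⊆ U`, the subspace `U`
locally connected, and `I` negligible in the subspace `U`. -/
def NegligibleElem {Y : Type*} [TopologicalSpace Y] (U I : Set Y) : Prop :=
  IsOpen U ∧ I ⊆ U ∧ LocallyConnectedSpace ↥U ∧
    IsNegligible ((Subtype.val ⁻¹' I : Set ↥U))

/-- A continuous function is diffuse if it pulls back negligible subset elements
to negligible subset elements. -/
def Diffuse {X Y : Type*} [TopologicalSpace X] [TopologicalSpace Y] (f : X → Y) : Prop :=
  Continuous f ∧ ∀ U I : Set Y, NegligibleElem U I → NegligibleElem (f ⁻¹' U) (f ⁻¹' I)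

section Negligible

variable {T : Type*} [TopologicalSpace T]

lemma isNegligible_iff {K : Set T} :
    IsNegligible K ↔
      IsOpen Kᶜ ∧ ∀ C : Set T, IsOpen C → IsConnected C → IsConnected (C \ K) := by
  simp only [IsNegligible, IsZDense, sdiff_eq, inter_comm]

lemma isConnected_preimage_val_iff {V C : Set T} (hCV : C ⊆ V) :
    IsConnected (Subtype.val ⁻¹' C : Set V) ↔ IsConnected C := by
  rw [IsConnected, IsConnected, ← IsInducing.subtypeVal.isPreconnected_image, ← image_nonempty,
    Subtype.image_preimage_coe, inter_eq_right.2 hCV]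

lemma isNegligible_preimage_val_iff {V J : Set T} (hV : IsOpen V) :
    IsNegligible (Subtype.val ⁻¹' J : Set V) ↔
      IsOpen (V \ J) ∧ ∀ C ⊆ V, IsOpen C → IsConnected C → IsConnected (C \ J) := by
  rw [isNegligible_iff, ← preimage_compl,
    hV.isOpenEmbedding_subtypeVal.isOpen_iff_image_isOpen, Subtype.image_preimage_coe, ← sdiff_eq]
  refine and_congr_right fun _ => ⟨fun h C hCV hCo hCc => ?_, fun h C hCo hCc => ?_⟩
  · rw [← isConnected_preimage_val_iff (sdiff_subset.trans hCV)]
    exact h _ (hCo.preimage continuous_subtype_val) ((isConnected_preimage_val_iff hCV).2 hCc)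
  · have hCV : Subtype.val '' C ⊆ V := Subtype.coe_image_subset V C
    rw [← preimage_image_eq C Subtype.val_injective] at hCc ⊢
    rw [← preimage_sdiff, isConnected_preimage_val_iff (sdiff_subset.trans hCV)]
    exact h _ hCV (hV.isOpenMap_subtype_val _ hCo) ((isConnected_preimage_val_iff hCV).1 hCc)

lemma IsConnected.diff_of_locally {C K : Set T} (hC : IsConnected C) (hCo : IsOpen C)
    (hloc : ∀ x ∈ C, ∃ N, IsOpen N ∧ x ∈ N ∧ N ⊆ C ∧ IsPreconnected (N \ K))
    (hdense : ∀ O, IsOpen O → O ⊆ C → O.Nonempty → (O \ K).Nonempty) :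
    IsConnected (C \ K) := by
  choose! N hNo hxN hNC hNK using hloc
  have hmeet : ∀ x ∈ C, ∀ y ∈ N x, ((N x \ K) ∩ (N y \ K)).Nonempty := by
    intro x hx y hy
    have hyC := hNC x hx hy
    obtain ⟨w, ⟨hwx, hwy⟩, hwK⟩ := hdense (N x ∩ N y) ((hNo x hx).inter (hNo y hyC))
      (inter_subset_left.trans (hNC x hx)) ⟨y, hy, hxN y hyC⟩
    exact ⟨w, ⟨hwx, hwK⟩, hwy, hwK⟩
  let P x y := ∃ t ⊆ C \ K, IsPreconnected t ∧ N x \ K ⊆ t ∧ N y \ K ⊆ t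
  have hP : ∀ x ∈ C, ∀ y ∈ C, P x y := by
    intro x hx y hy
    refine hC.isPreconnected.induction₂ P (fun x hx => ?_) ?_ ?_ hx hy
    · filter_upwards [mem_nhdsWithin_of_mem_nhds ((hNo x hx).mem_nhds (hxN x hx))] with y hy
      have hyC := hNC x hx hy
      exact ⟨(N x \ K) ∪ (N y \ K),
        union_subset (sdiff_subset_sdiff_left (hNC x hx)) (sdiff_subset_sdiff_left (hNC y hyC)),
        (hNK x hx).union' (hmeet x hx y hy) (hNK y hyC), subset_union_left, subset_union_right⟩
    · rintro x y z - hy - ⟨s, hsC, hs, hxs, hys⟩ ⟨t, htC, ht, hyt, hzt⟩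
      have hNy := hdense (N y) (hNo y hy) (hNC y hy) ⟨y, hxN y hy⟩
      exact ⟨s ∪ t, union_subset hsC htC, hs.union' (hNy.mono (subset_inter hys hyt)) ht,
        hxs.trans subset_union_left, hzt.trans subset_union_right⟩
    · rintro x y - - ⟨t, htC, ht, hxt, hyt⟩
      exact ⟨t, htC, ht, hyt, hxt⟩
  refine ⟨hdense C hCo subset_rfl hC.nonempty, isPreconnected_of_forall_pair ?_⟩
  intro x hx y hy
  obtain ⟨t, htC, ht, hxt, hyt⟩ := hP x hx.1 y hy.1
  exact ⟨t, htC, hxt ⟨hxN x hx.1, hx.2⟩, hyt ⟨hxN y hy.1, hy.2⟩, ht⟩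

variable [LocallyConnectedSpace T]

lemma IsOpen.exists_isOpen_isConnected_subset {O : Set T} (hO : IsOpen O) {x : T} (hx : x ∈ O) :
    ∃ N ⊆ O, IsOpen N ∧ x ∈ N ∧ IsConnected N :=
  locallyConnectedSpace_iff_subsets_isOpen_isConnected.1 ‹_› x O (hO.mem_nhds hx)

lemma IsNegligible.subset {I K : Set T} (hI : IsNegligible I) (hKI : K ⊆ I) (hK : IsClosed K) :
    IsNegligible K := by
  rw [isNegligible_iff] at hI ⊢
  refine ⟨hK.isOpen_compl, fun C hCo hCc => ?_⟩
  have hsub : C \ I ⊆ C \ K := sdiff_subset_sdiff_right hKI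
  refine ⟨(hI.2 C hCo hCc).nonempty.mono hsub,
    (hI.2 C hCo hCc).isPreconnected.subset_closure hsub fun x hx => ?_⟩
  refine mem_closure_iff.2 fun O hO hxO => ?_
  obtain ⟨N, hNOC, hNo, -, hNc⟩ :=
    (hO.inter hCo).exists_isOpen_isConnected_subset ⟨hxO, hx.1⟩
  obtain ⟨y, hyN, hyI⟩ := (hI.2 N hNo hNc).nonempty
  exact ⟨y, (hNOC hyN).1, (hNOC hyN).2, hyI⟩

lemma isNegligible_of_isConnected_diff {V K : Set T} (hV : IsOpen V) (hKV : K ⊆ V)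
    (hK : IsClosed K) (h : ∀ C ⊆ V, IsOpen C → IsConnected C → IsConnected (C \ K)) :
    IsNegligible K := by
  have hnhd : ∀ x O, IsOpen O → x ∈ O → x ∈ K →
      ∃ N ⊆ O, IsOpen N ∧ x ∈ N ∧ IsConnected (N \ K) := fun x O hO hxO hxK => by
    obtain ⟨N, hNOV, hNo, hxN, hNc⟩ :=
      (hO.inter hV).exists_isOpen_isConnected_subset ⟨hxO, hKV hxK⟩
    exact ⟨N, fun y hy => (hNOV hy).1, hNo, hxN, h N (fun y hy => (hNOV hy).2) hNo hNc⟩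
  refine isNegligible_iff.2 ⟨hK.isOpen_compl, fun C hCo hCc => hCc.diff_of_locally hCo ?_ ?_⟩
  · intro x hx
    by_cases hxK : x ∈ K
    · obtain ⟨N, hNC, hNo, hxN, hN⟩ := hnhd x C hCo hx hxK
      exact ⟨N, hNo, hxN, hNC, hN.isPreconnected⟩
    · obtain ⟨N, hNCK, hNo, hxN, hNc⟩ :=
        (hCo.inter hK.isOpen_compl).exists_isOpen_isConnected_subset ⟨hx, hxK⟩
      refine ⟨N, hNo, hxN, fun y hy => (hNCK hy).1, ?_⟩
      rw [sdiff_eq_left.2 (disjoint_left.2 fun y hy => (hNCK hy).2)]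
      exact hNc.isPreconnected
  · rintro O hO - ⟨x, hxO⟩
    by_cases hxK : x ∈ K
    · obtain ⟨N, hNO, -, -, hN⟩ := hnhd x O hO hxO hxK
      exact hN.nonempty.mono (sdiff_subset_sdiff_left hNO)
    · exact ⟨x, hxO, hxK⟩

end Negligible

section Diffuse

variable {X Y : Type*} [TopologicalSpace X] [TopologicalSpace Y]

lemma NegligibleElem.isOpen_diff {U I : Set Y} (hUI : NegligibleElem U I) : IsOpen (U \ I) :=
  ((isNegligible_preimage_val_iff hUI.1).1 hUI.2.2.2).1

lemma IsNegligible.negligibleElem_univ [LocallyConnectedSpace Y] {I : Set Y}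
    (hI : IsNegligible I) : NegligibleElem univ I := by
  refine ⟨isOpen_univ, subset_univ I, isOpen_univ.locallyConnectedSpace,
    (isNegligible_preimage_val_iff isOpen_univ).2
      ⟨?_, fun C _ => (isNegligible_iff.1 hI).2 C⟩⟩
  rw [← compl_eq_univ_sdiff]
  exact hI.1

lemma NegligibleElem.isNegligible_closure [LocallyConnectedSpace Y] {U I A : Set Y}
    (hUI : NegligibleElem U I) (hAI : A ⊆ I) (hAU : closure A ⊆ U) :
    IsNegligible (closure A) := by
  have hAI' : closure A ⊆ I := fun x hx => by_contra fun hxI =>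
    disjoint_left.1 ((disjoint_sdiff_right.mono_left hAI).closure_left hUI.isOpen_diff) hx
      ⟨hAU hx, hxI⟩
  obtain ⟨hU, -, hlc, hneg⟩ := hUI
  have : IsNegligible (Subtype.val ⁻¹' closure A : Set U) :=
    hneg.subset (preimage_mono hAI') (isClosed_closure.preimage continuous_subtype_val)
  exact isNegligible_of_isConnected_diff hU hAU isClosed_closure
    ((isNegligible_preimage_val_iff hU).1 this).2

lemma Diffuse.isConnected_diff_preimage {g : X → Y} (hg : Diffuse g) {U I : Set Y}
    (hUI : NegligibleElem U I) {C : Set X} (hCU : C ⊆ g ⁻¹' U) (hCo : IsOpen C)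
    (hCc : IsConnected C) : IsConnected (C \ g ⁻¹' I) :=
  ((isNegligible_preimage_val_iff (hUI.1.preimage hg.1)).1 (hg.2 U I hUI).2.2.2).2 C hCU hCo hCc

lemma isConnected_diff_preimage_of_diffuse_restrict {f : X → Y} {S : Set X}
    (hres : Diffuse (fun x : S => f x)) {U I : Set Y} (hUI : NegligibleElem U I) {H : Set X}
    (hHS : H ⊆ S) (hHU : H ⊆ f ⁻¹' U) (hHo : IsOpen H) (hHc : IsConnected H) :
    IsConnected (H \ f ⁻¹' I) :=
  (isConnected_preimage_val_iff (sdiff_subset.trans hHS)).1 <|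
    hres.isConnected_diff_preimage hUI (fun _ hx => hHU hx) (hHo.preimage continuous_subtype_val)
      ((isConnected_preimage_val_iff hHS).2 hHc)

lemma diffuse_of_isConnected_diff [LocallyConnectedSpace X] {f : X → Y} (hf : Continuous f)
    (h : ∀ U I, NegligibleElem U I → ∀ C ⊆ f ⁻¹' U, IsOpen C → IsConnected C →
      IsConnected (C \ f ⁻¹' I)) :
    Diffuse f := by
  refine ⟨hf, fun U I hUI => ?_⟩
  have hfU : IsOpen (f ⁻¹' U) := hUI.1.preimage hf
  exact ⟨hfU, preimage_mono hUI.2.1, hfU.locallyConnectedSpace,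
    (isNegligible_preimage_val_iff hfU).2 ⟨hUI.isOpen_diff.preimage hf, h U I hUI⟩⟩

end Diffuse

section TwoSided

variable {X : Type*} [TopologicalSpace X]

/-- Abstracts a ball centred on a point of a codimension-one submanifold `Z`, together with
its two open half-balls `Hp` and `Hn`. -/
structure TwoSidedNhd (Z V Hp Hn : Set X) : Prop where
  isOpen : IsOpen V
  isConnected : IsConnected V
  isOpen_pos : IsOpen Hp
  isOpen_neg : IsOpen Hn
  isConnected_pos : IsConnected Hp
  isConnected_neg : IsConnected Hn
  diff_eq : V \ Z = Hp ∪ Hn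
  disjoint : Disjoint Hp Hn
  exists_arc : ∀ z ∈ V ∩ Z, ∀ N, IsOpen N → z ∈ N →
    ∃ L, IsPreconnected L ∧ z ∈ L ∧ L ⊆ V ∩ N ∧
      (L ∩ Hp).Nonempty ∧ (L ∩ Hn).Nonempty

def IsLocallyTwoSided (Z : Set X) : Prop :=
  ∀ z ∈ Z, ∀ O, IsOpen O → z ∈ O →
    ∃ V Hp Hn, z ∈ V ∧ V ⊆ O ∧ TwoSidedNhd Z V Hp Hn

namespace TwoSidedNhd

variable {Z V Hp Hn : Set X}

lemma pos_subset (h : TwoSidedNhd Z V Hp Hn) : Hp ⊆ V \ Z :=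
  h.diff_eq ▸ subset_union_left

lemma neg_subset (h : TwoSidedNhd Z V Hp Hn) : Hn ⊆ V \ Z :=
  h.diff_eq ▸ subset_union_right

lemma image {A : Type*} [TopologicalSpace A] {φ : A → X} (hφ : IsOpenEmbedding φ)
    {V Hp Hn : Set A} (h : TwoSidedNhd (φ ⁻¹' Z) V Hp Hn) :
    TwoSidedNhd Z (φ '' V) (φ '' Hp) (φ '' Hn) where
  isOpen := hφ.isOpenMap _ h.isOpen
  isConnected := h.isConnected.image φ hφ.continuous.continuousOn
  isOpen_pos := hφ.isOpenMap _ h.isOpen_pos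
  isOpen_neg := hφ.isOpenMap _ h.isOpen_neg
  isConnected_pos := h.isConnected_pos.image φ hφ.continuous.continuousOn
  isConnected_neg := h.isConnected_neg.image φ hφ.continuous.continuousOn
  diff_eq := by rw [← image_sdiff_preimage, h.diff_eq, image_union]
  disjoint := (disjoint_image_iff hφ.injective).2 h.disjoint
  exists_arc := by
    rintro _ ⟨⟨a, ha, rfl⟩, hz⟩ N hN hzN
    obtain ⟨L, hL, haL, hLV, hLp, hLn⟩ :=
      h.exists_arc a ⟨ha, hz⟩ (φ ⁻¹' N) (hN.preimage hφ.continuous) hzN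
    exact ⟨φ '' L, hL.image φ hφ.continuous.continuousOn, mem_image_of_mem φ haL,
      image_subset_iff.2 fun x hx => ⟨mem_image_of_mem φ (hLV hx).1, (hLV hx).2⟩,
      (hLp.image φ).mono (image_inter_subset _ _ _),
      (hLn.image φ).mono (image_inter_subset _ _ _)⟩

lemma isConnected_diff (h : TwoSidedNhd Z V Hp Hn) {K : Set X} (hK : IsOpen (V \ K))
    (hp : IsConnected (Hp \ K)) (hn : IsConnected (Hn \ K)) (hZK : ((V ∩ Z) \ K).Nonempty) :
    IsConnected (V \ K) := by
  have arc : ∀ z ∈ (V ∩ Z) \ K, ∃ L, IsPreconnected L ∧ z ∈ L ∧ L ⊆ V \ K ∧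
      (L ∩ (Hp \ K)).Nonempty ∧ (L ∩ (Hn \ K)).Nonempty := by
    intro z hz
    obtain ⟨L, hL, hzL, hLV, ⟨p, hpL, hp⟩, ⟨q, hqL, hq⟩⟩ :=
      h.exists_arc z hz.1 (V \ K) hK ⟨hz.1.1, hz.2⟩
    exact ⟨L, hL, hzL, fun x hx => (hLV hx).2, ⟨p, hpL, hp, (hLV hpL).2.2⟩,
      ⟨q, hqL, hq, (hLV hqL).2.2⟩⟩
  have hpV : Hp \ K ⊆ V \ K := sdiff_subset_sdiff_left (h.pos_subset.trans sdiff_subset)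
  have hnV : Hn \ K ⊆ V \ K := sdiff_subset_sdiff_left (h.neg_subset.trans sdiff_subset)
  obtain ⟨z₀, hz₀⟩ := hZK
  obtain ⟨L₀, hL₀, -, hL₀V, hL₀p, hL₀n⟩ := arc z₀ hz₀
  set B := (Hp \ K) ∪ L₀ ∪ (Hn \ K)
  have hB : IsPreconnected B :=
    (hp.isPreconnected.union' (inter_comm L₀ _ ▸ hL₀p) hL₀).union'
      (hL₀n.mono (inter_subset_inter_left _ subset_union_right)) hn.isPreconnected
  have hBV : B ⊆ V \ K := union_subset (union_subset hpV hL₀V) hnV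
  obtain ⟨x₀, hx₀⟩ := hp.nonempty
  have hx₀B : x₀ ∈ B := Or.inl (Or.inl hx₀)
  refine ⟨⟨x₀, hpV hx₀⟩, isPreconnected_of_forall x₀ fun y hy => ?_⟩
  by_cases hyZ : y ∈ Z
  · obtain ⟨L, hL, hyL, hLV, hLp, -⟩ := arc y ⟨⟨hy.1, hyZ⟩, hy.2⟩
    exact ⟨B ∪ L, union_subset hBV hLV, Or.inl hx₀B, Or.inr hyL,
      hB.union' (inter_comm L B ▸
        hLp.mono (inter_subset_inter_right L fun x hx => Or.inl (Or.inl hx))) hL⟩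
  · have hy' : y ∈ Hp ∪ Hn := h.diff_eq ▸ ⟨hy.1, hyZ⟩
    refine ⟨B, hBV, hx₀B, ?_, hB⟩
    rcases hy' with hyp | hyn
    exacts [Or.inl (Or.inl ⟨hyp, hy.2⟩), Or.inr ⟨hyn, hy.2⟩]

lemma not_isPreconnected_diff (h : TwoSidedNhd Z V Hp Hn) {K : Set X} (hZK : V ∩ Z ⊆ K)
    (hp : (Hp \ K).Nonempty) (hn : (Hn \ K).Nonempty) : ¬ IsPreconnected (V \ K) := by
  intro hc
  have hcover : V \ K ⊆ Hp ∪ Hn := fun y hy =>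
    h.diff_eq ▸ ⟨hy.1, fun hyZ => hy.2 (hZK ⟨hy.1, hyZ⟩)⟩
  obtain ⟨w, -, hwp, hwn⟩ := hc Hp Hn h.isOpen_pos h.isOpen_neg hcover
    (hp.mono fun y hy => ⟨⟨(h.pos_subset hy.1).1, hy.2⟩, hy.1⟩)
    (hn.mono fun y hy => ⟨⟨(h.neg_subset hy.1).1, hy.2⟩, hy.1⟩)
  exact disjoint_left.1 h.disjoint hwp hwn

end TwoSidedNhd

end TwoSided

section Euclidean

open Metric

variable {ι : Type*} [Fintype ι] {i : ι}

lemma exists_mem_ball_apply_eq (q : EuclideanSpace ℝ ι) (i : ι) {ε t : ℝ} (ht : |t| < ε) :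
    ∃ y ∈ ball q ε, y i = q i + t := by
  classical
  refine ⟨q + EuclideanSpace.single i t, ?_, by simp⟩
  rwa [mem_ball, dist_self_add_left, PiLp.norm_single, Real.norm_eq_abs]

lemma ball_inter_pos_nonempty {q : EuclideanSpace ℝ ι} (hq : q i = 0) {ε : ℝ} (hε : 0 < ε) :
    (ball q ε ∩ {y | 0 < y i}).Nonempty := by
  obtain ⟨y, hy, hyi⟩ := exists_mem_ball_apply_eq q i (ε := ε) (t := ε / 2)
    (abs_lt.2 ⟨by linarith, by linarith⟩)
  exact ⟨y, hy, show 0 < y i by rw [hyi, hq]; linarith⟩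

lemma ball_inter_neg_nonempty {q : EuclideanSpace ℝ ι} (hq : q i = 0) {ε : ℝ} (hε : 0 < ε) :
    (ball q ε ∩ {y | y i < 0}).Nonempty := by
  obtain ⟨y, hy, hyi⟩ := exists_mem_ball_apply_eq q i (ε := ε) (t := -(ε / 2))
    (abs_lt.2 ⟨by linarith, by linarith⟩)
  exact ⟨y, hy, show y i < 0 by rw [hyi, hq]; linarith⟩

lemma twoSidedNhd_ball {p : EuclideanSpace ℝ ι} (hp : p i = 0) {r : ℝ} (hr : 0 < r) :
    TwoSidedNhd {y | y i = 0} (ball p r) (ball p r ∩ {y | 0 < y i})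
      (ball p r ∩ {y | y i < 0}) := by
  have hcont : Continuous fun y : EuclideanSpace ℝ ι => y i := (EuclideanSpace.proj i).continuous
  have hlin : IsLinearMap ℝ fun y : EuclideanSpace ℝ ι => y i :=
    ⟨fun _ _ => rfl, fun _ _ => rfl⟩
  refine
    { isOpen := isOpen_ball
      isConnected := (convex_ball p r).isConnected (nonempty_ball.2 hr)
      isOpen_pos := isOpen_ball.inter (isOpen_lt continuous_const hcont)
      isOpen_neg := isOpen_ball.inter (isOpen_lt hcont continuous_const)
      isConnected_pos := ((convex_ball p r).inter (convex_halfSpace_gt hlin 0)).isConnected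
        (ball_inter_pos_nonempty hp hr)
      isConnected_neg := ((convex_ball p r).inter (convex_halfSpace_lt hlin 0)).isConnected
        (ball_inter_neg_nonempty hp hr)
      diff_eq := ?_
      disjoint := disjoint_left.2 fun y hyp hyn =>
        lt_asymm (show 0 < y i from hyp.2) (show y i < 0 from hyn.2)
      exists_arc := ?_ }
  · ext y
    simp only [mem_sdiff, mem_union, mem_inter_iff, mem_ofPred_eq, ← and_or_left, ne_iff_lt_or_gt]
    tauto
  · rintro q ⟨hqB, hq⟩ N hN hqN
    obtain ⟨ε, hε, hεN⟩ := Metric.isOpen_iff.1 (isOpen_ball.inter hN) q ⟨hqB, hqN⟩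
    exact ⟨ball q ε, (convex_ball q ε).isPreconnected, mem_ball_self hε, hεN,
      (ball_inter_pos_nonempty hq hε).mono fun y hy => ⟨hy.1, (hεN hy.1).1, hy.2⟩,
      (ball_inter_neg_nonempty hq hε).mono fun y hy => ⟨hy.1, (hεN hy.1).1, hy.2⟩⟩

end Euclidean

lemma isLocallyTwoSided_of_chart {X ι : Type*} [TopologicalSpace X] [Fintype ι] (i : ι)
    {Z : Set X} (hZ : ∀ x ∈ Z, ∃ U : Set X, IsOpen U ∧ x ∈ U ∧
      ∃ e : U ≃ₜ EuclideanSpace ℝ ι, e '' (Subtype.val ⁻¹' Z) = {y | y i = 0}) :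
    IsLocallyTwoSided Z := by
  intro z hz O hO hzO
  obtain ⟨U, hU, hzU, e, he⟩ := hZ z hz
  set φ : EuclideanSpace ℝ ι → X := Subtype.val ∘ e.symm
  have hφ : IsOpenEmbedding φ := hU.isOpenEmbedding_subtypeVal.comp e.symm.isOpenEmbedding
  have hφZ : φ ⁻¹' Z = {y | y i = 0} := by rw [← he, e.image_eq_preimage_symm]; rfl
  set p := e ⟨z, hzU⟩
  have hp : p i = 0 := by
    change p ∈ {y | y i = 0}
    exact he ▸ mem_image_of_mem e hz
  have hφp : φ p = z := by simp [φ, p]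
  obtain ⟨r, hr, hrO⟩ := Metric.isOpen_iff.1 (hO.preimage hφ.continuous) p
    (by rw [mem_preimage, hφp]; exact hzO)
  have hV := twoSidedNhd_ball hp hr
  rw [← hφZ] at hV
  exact ⟨_, _, _, hφp ▸ mem_image_of_mem φ (Metric.mem_ball_self hr), image_subset_iff.2 hrO,
    hV.image hφ⟩

section Main

variable {X Y : Type*} [TopologicalSpace X] [TopologicalSpace Y] {f : X → Y} {Z : Set X}

lemma not_diffuse_of_isNegligible_closure [LocallyConnectedSpace Y] (hZ : IsLocallyTwoSided Z)
    (hres : Diffuse (fun x : ↥Zᶜ => f x)) {O : Set X} (hO : IsOpen O) (hOZ : (O ∩ Z).Nonempty)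
    (hneg : IsNegligible (closure (f '' (O ∩ Z)))) : ¬ Diffuse f := by
  intro hdiff
  obtain ⟨z, hzO, hzZ⟩ := hOZ
  obtain ⟨V, Hp, Hn, -, hVO, hV⟩ := hZ z hzZ O hO hzO
  have hUI := hneg.negligibleElem_univ
  have side : ∀ H ⊆ V \ Z, IsOpen H → IsConnected H →
      (H \ f ⁻¹' closure (f '' (O ∩ Z))).Nonempty := fun H hH hHo hHc =>
    (isConnected_diff_preimage_of_diffuse_restrict hres hUI (fun y hy => (hH hy).2)
      (fun _ _ => mem_univ _) hHo hHc).nonempty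
  exact hV.not_isPreconnected_diff (K := f ⁻¹' closure (f '' (O ∩ Z)))
    (fun y hy => subset_closure (mem_image_of_mem f ⟨hVO hy.1, hy.2⟩))
    (side Hp hV.pos_subset hV.isOpen_pos hV.isConnected_pos)
    (side Hn hV.neg_subset hV.isOpen_neg hV.isConnected_neg)
    (hdiff.isConnected_diff_preimage hUI (subset_univ _) hV.isOpen hV.isConnected).isPreconnected

variable [RegularSpace Y] [LocallyConnectedSpace Y]

lemma exists_mem_inter_diff_preimage (hf : Continuous f)
    (hW : ∀ O, IsOpen O → (O ∩ Z).Nonempty → ¬ IsNegligible (closure (f '' (O ∩ Z))))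
    {U I : Set Y} (hUI : NegligibleElem U I) {V : Set X} (hV : IsOpen V)
    (hVZ : (V ∩ Z).Nonempty) : ((V ∩ Z) \ f ⁻¹' I).Nonempty := by
  by_contra h
  have hVZI : V ∩ Z ⊆ f ⁻¹' I := sdiff_eq_empty.1 (not_nonempty_iff_eq_empty.1 h)
  obtain ⟨z, hzV, hzZ⟩ := hVZ
  -- regularity of `Y`: shrink `V` so that the closure of its image stays inside `U`
  obtain ⟨t, ht, htc, htU⟩ :=
    exists_mem_nhds_isClosed_subset (hUI.1.mem_nhds (hUI.2.1 (hVZI ⟨hzV, hzZ⟩)))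
  refine hW (V ∩ f ⁻¹' interior t) (hV.inter (isOpen_interior.preimage hf))
    ⟨z, ⟨hzV, mem_interior_iff_mem_nhds.2 ht⟩, hzZ⟩ (hUI.isNegligible_closure ?_ ?_)
  · rintro _ ⟨x, ⟨⟨hxV, -⟩, hxZ⟩, rfl⟩
    exact hVZI ⟨hxV, hxZ⟩
  · refine (closure_minimal ?_ htc).trans htU
    rintro _ ⟨x, ⟨⟨-, hxt⟩, -⟩, rfl⟩
    exact interior_subset hxt

variable [LocallyConnectedSpace X]

lemma exists_nhd_isConnected_diff_preimage (hf : Continuous f) (hZ : IsLocallyTwoSided Z)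
    (hZc : IsClosed Z) (hres : Diffuse (fun x : ↥Zᶜ => f x))
    (hW : ∀ O, IsOpen O → (O ∩ Z).Nonempty → ¬ IsNegligible (closure (f '' (O ∩ Z))))
    {U I : Set Y} (hUI : NegligibleElem U I) {C : Set X} (hCU : C ⊆ f ⁻¹' U) (hC : IsOpen C)
    {x : X} (hx : x ∈ C) :
    ∃ N, IsOpen N ∧ x ∈ N ∧ N ⊆ C ∧ IsConnected (N \ f ⁻¹' I) := by
  by_cases hxZ : x ∈ Z
  · obtain ⟨V, Hp, Hn, hxV, hVC, hV⟩ := hZ x hxZ C hC hx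
    have hVI : IsOpen (V \ f ⁻¹' I) := by
      have := hV.isOpen.inter (hUI.isOpen_diff.preimage hf)
      rwa [preimage_sdiff, ← inter_sdiff_assoc, inter_eq_left.2 (hVC.trans hCU)] at this
    have side : ∀ H ⊆ V \ Z, IsOpen H → IsConnected H → IsConnected (H \ f ⁻¹' I) :=
      fun H hH => isConnected_diff_preimage_of_diffuse_restrict hres hUI
        (fun y hy => (hH hy).2) (fun y hy => hCU (hVC (hH hy).1))
    exact ⟨V, hV.isOpen, hxV, hVC, hV.isConnected_diff hVI
      (side Hp hV.pos_subset hV.isOpen_pos hV.isConnected_pos)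
      (side Hn hV.neg_subset hV.isOpen_neg hV.isConnected_neg)
      (exists_mem_inter_diff_preimage hf hW hUI hV.isOpen ⟨x, hxV, hxZ⟩)⟩
  · obtain ⟨N, hNCZ, hNo, hxN, hNc⟩ :=
      (hC.inter hZc.isOpen_compl).exists_isOpen_isConnected_subset ⟨hx, hxZ⟩
    exact ⟨N, hNo, hxN, fun y hy => (hNCZ hy).1,
      isConnected_diff_preimage_of_diffuse_restrict hres hUI (fun y hy => (hNCZ hy).2)
        (fun y hy => hCU (hNCZ hy).1) hNo hNc⟩

lemma diffuse_of_forall_not_isNegligible (hf : Continuous f) (hZ : IsLocallyTwoSided Z)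
    (hZc : IsClosed Z) (hres : Diffuse (fun x : ↥Zᶜ => f x))
    (hW : ∀ O, IsOpen O → (O ∩ Z).Nonempty → ¬ IsNegligible (closure (f '' (O ∩ Z)))) :
    Diffuse f := by
  refine diffuse_of_isConnected_diff hf fun U I hUI C hCU hCo hCc => hCc.diff_of_locally hCo ?_ ?_
  · intro x hx
    obtain ⟨N, hNo, hxN, hNC, hN⟩ :=
      exists_nhd_isConnected_diff_preimage hf hZ hZc hres hW hUI hCU hCo hx
    exact ⟨N, hNo, hxN, hNC, hN.isPreconnected⟩
  · rintro O hO hOC ⟨x, hx⟩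
    obtain ⟨N, -, -, hNO, hN⟩ :=
      exists_nhd_isConnected_diff_preimage hf hZ hZc hres hW hUI (hOC.trans hCU) hO hx
    exact hN.nonempty.mono (sdiff_subset_sdiff_left hNO)

end Main

theorem not_diffuse_iff_exists_negligible_closure_general
    {X Y : Type*} [TopologicalSpace X] [LocallyConnectedSpace X]
    [TopologicalSpace Y] [T2Space Y] [NormalSpace Y] [LocallyConnectedSpace Y]
    (n : ℕ)
    (f : X → Y) (hf : Continuous f)
    {Z : Set X} (hZc : IsClosed Z)
    (hZman : ∀ x ∈ Z, ∃ (U : Set X), IsOpen U ∧ x ∈ U ∧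
      ∃ e : ↥U ≃ₜ EuclideanSpace ℝ (Fin (n + 1)),
        e '' (Subtype.val ⁻¹' Z) = {y : EuclideanSpace ℝ (Fin (n + 1)) | y 0 = 0})
    (hres : Diffuse (fun x : ↥(Zᶜ) => f ↑x)) :
    ¬ Diffuse f ↔
      ∃ W : Set X, W ⊆ Z ∧ W.Nonempty ∧ (∃ O : Set X, IsOpen O ∧ W = O ∩ Z) ∧
        IsNegligible (closure (f '' W)) := by
  have hZ : IsLocallyTwoSided Z := isLocallyTwoSided_of_chart 0 hZman
  constructor
  · intro hnd
    by_contra hW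
    exact hnd (diffuse_of_forall_not_isNegligible hf hZ hZc hres fun O hO hne hneg =>
      hW ⟨O ∩ Z, inter_subset_right, hne, ⟨O, hO, rfl⟩, hneg⟩)
  · rintro ⟨W, -, hne, ⟨O, hO, rfl⟩, hneg⟩
    exact not_diffuse_of_isNegligible_closure hZ hres hO hne hneg

/-- Let `X` be a topological manifold (locally homeomorphic to `ℝ^{n+1}`), `Y` a
normal Hausdorff locally connected space, `f : X → Y` continuous, and `Z ⊆ X` a
closed codimension-1 submanifold such that `f` is diffuse on `X − Z`.  Then `f`
fails to be diffuse iff there is a non-empty open subset `W` of `Z` whose image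
under `f` has negligible closure in `Y`. -/
theorem not_diffuse_iff_exists_negligible_closure
    {X Y : Type*} [TopologicalSpace X] [T2Space X] [LocallyConnectedSpace X]
    [TopologicalSpace Y] [T2Space Y] [NormalSpace Y] [LocallyConnectedSpace Y]
    (n : ℕ)
    (hman : ∀ x : X, ∃ U : Set X, IsOpen U ∧ x ∈ U ∧
      Nonempty (↥U ≃ₜ EuclideanSpace ℝ (Fin (n + 1))))
    (f : X → Y) (hf : Continuous f)
    {Z : Set X} (hZc : IsClosed Z)
    (hZman : ∀ x ∈ Z, ∃ (U : Set X), IsOpen U ∧ x ∈ U ∧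
      ∃ e : ↥U ≃ₜ EuclideanSpace ℝ (Fin (n + 1)),
        e '' (Subtype.val ⁻¹' Z) = {y : EuclideanSpace ℝ (Fin (n + 1)) | y 0 = 0})
    (hres : Diffuse (fun x : ↥(Zᶜ) => f ↑x)) :
    ¬ Diffuse f ↔
      ∃ W : Set X, W ⊆ Z ∧ W.Nonempty ∧ (∃ O : Set X, IsOpen O ∧ W = O ∩ Z) ∧
        IsNegligible (closure (f '' W)) :=
  not_diffuse_iff_exists_negligible_closure_general n f hf hZc hZman hres
end
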